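/- Let U be a finite set with |U| ≥ 4 and let Q_good be a set of good quadruples over U with |Q_good| = q_good > 0, and set ε = q_good/(8q) where q = 3·C(|U|,4). If a vertex a is not U-good, then the total number of good quadruples containing a is strictly less than ⌈4 q_good/|U|⌉. -/

import Mathlib

/-!
Every good quadruple through `a` has the form `{{a, b}, {c, d}}` with `{c, d}` a good pair for
`(a, b)`, so there are at most `∑_{b ≠ a} |goodPairs a b|` of them. As `a` is not `U`-good, fewer
than `4ε(|U| - 1)` vertices `b` have at least `4ε·C(|U| - 2, 2)` good pairs; each of these has at
most `C(|U| - 2, 2)` of them and every other `b` fewer than `4ε·C(|U| - 2, 2)`. The sum is thus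
strictly below `8ε(|U| - 1)·C(|U| - 2, 2) = 4 q_good / |U|`, the equality because each quadruple
arises from exactly two ordered pairs of disjoint `2`-subsets, whence `2q = C(|U|, 2)·C(|U| - 2, 2)`.
-/

open SimpleGraph

def interval {V : Type*} (G : SimpleGraph V) (u v : V) : Set V :=
  {x | G.dist u x + G.dist x v = G.dist u v}

def GoodQuad {V : Type*} (G : SimpleGraph V) (a b c d : V) : Prop :=
  a ≠ b ∧ a ≠ c ∧ a ≠ d ∧ b ≠ c ∧ b ≠ d ∧ c ≠ d ∧
    (interval G a b ∩ interval G c d).Nonempty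

/-- Quadruples `{(a,b),(c,d)}` over `U`, encoded as `{{a,b},{c,d}}`. -/
def QuadSet {V : Type*} [DecidableEq V] (U : Finset V) : Set (Finset (Finset V)) :=
  {Q | ∃ a b c d : V, a ∈ U ∧ b ∈ U ∧ c ∈ U ∧ d ∈ U ∧
    a ≠ b ∧ a ≠ c ∧ a ≠ d ∧ b ≠ c ∧ b ≠ d ∧ c ≠ d ∧
    Q = {{a, b}, {c, d}}}

/-- Good quadruples over `U`. -/
def goodQuadSet {V : Type*} [DecidableEq V] (G : SimpleGraph V) (U : Finset V) :
    Set (Finset (Finset V)) :=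
  {Q | ∃ a b c d : V, a ∈ U ∧ b ∈ U ∧ c ∈ U ∧ d ∈ U ∧
    GoodQuad G a b c d ∧ Q = {{a, b}, {c, d}}}

/-- Good quadruples over `U` containing the vertex `a`. -/
def goodQuadsContaining {V : Type*} [DecidableEq V] (G : SimpleGraph V) (U : Finset V)
    (a : V) : Set (Finset (Finset V)) :=
  {Q ∈ goodQuadSet G U | ∃ s ∈ Q, a ∈ s}

/-- The set of (unordered) pairs `{c,d} ⊆ U` such that `{(a,b),(c,d)}` is a good
quadruple. -/
def goodPairs {V : Type*} [DecidableEq V] (G : SimpleGraph V) (U : Finset V)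
    (a b : V) : Set (Finset V) :=
  {s | ∃ c ∈ U, ∃ d ∈ U, s = ({c, d} : Finset V) ∧ GoodQuad G a b c d}

/-- `ε_U = q_good(U) / (8 q(U))`. -/
noncomputable def epsU {V : Type*} [DecidableEq V] (G : SimpleGraph V) (U : Finset V) : ℚ :=
  ((goodQuadSet G U).ncard : ℚ) / (8 * ((QuadSet U).ncard : ℚ))

/-- `a` is a `U`-good node. -/
def UGood {V : Type*} [DecidableEq V] (G : SimpleGraph V) (U : Finset V) (a : V) : Prop :=
  ∃ Ua : Finset V, Ua ⊆ U ∧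
    ⌈4 * epsU G U * ((U.card : ℚ) - 1)⌉ ≤ (Ua.card : ℤ) ∧
    ∀ b ∈ Ua,
      ⌈4 * epsU G U * (((U.card - 2).choose 2 : ℕ) : ℚ)⌉ ≤ ((goodPairs G U a b).ncard : ℤ)

open Finset

theorem Finset.sum_lt_of_card_filter_lt {ι R : Type*} [CommRing R] [LinearOrder R]
    [IsStrictOrderedRing R] {s : Finset ι} {f : ι → R} {C α β : R} (hC : 0 < C) (hβ : 0 ≤ β)
    (hfC : ∀ i ∈ s, f i ≤ C) (hcard : (#{i ∈ s | β ≤ f i} : R) < α) :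
    ∑ i ∈ s, f i < α * C + #s * β := by
  rw [← sum_filter_add_sum_filter_not s (β ≤ f ·)]
  have hlarge : ∑ i ∈ s with β ≤ f i, f i ≤ #{i ∈ s | β ≤ f i} * C := by
    simpa using sum_le_card_nsmul {i ∈ s | β ≤ f i} f C fun i hi => hfC i (mem_filter.1 hi).1
  have hsmall : ∑ i ∈ s with ¬β ≤ f i, f i ≤ #{i ∈ s | ¬β ≤ f i} * β := by
    simpa using sum_le_card_nsmul {i ∈ s | ¬β ≤ f i} f β
      fun i hi => (not_le.1 (mem_filter.1 hi).2).le
  have hcard_small : (#{i ∈ s | ¬β ≤ f i} : R) ≤ #s := by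
    exact_mod_cast card_filter_le s _
  nlinarith [mul_lt_mul_of_pos_right hcard hC, mul_le_mul_of_nonneg_right hcard_small hβ]

theorem Finset.pair_eq_pair_iff {α : Type*} [DecidableEq α] {x y z w : α} :
    ({x, y} : Finset α) = {z, w} ↔ x = z ∧ y = w ∨ x = w ∧ y = z := by
  rw [← coe_inj, coe_pair, coe_pair, Set.pair_eq_pair_iff]

theorem Finset.disjoint_pair_pair_iff {α : Type*} [DecidableEq α] {a b c d : α} :
    Disjoint ({a, b} : Finset α) {c, d} ↔ a ≠ c ∧ a ≠ d ∧ b ≠ c ∧ b ≠ d := by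
  simp only [disjoint_insert_left, disjoint_singleton_left, mem_insert, mem_singleton]
  tauto

theorem Finset.two_mul_card_image_pair {α : Type*} [DecidableEq α] (D : Finset (α × α))
    (hne : ∀ p ∈ D, p.1 ≠ p.2) (hswap : ∀ p ∈ D, p.swap ∈ D) :
    2 * #(D.image fun p => ({p.1, p.2} : Finset α)) = #D := by
  rw [card_eq_sum_card_image (fun p => ({p.1, p.2} : Finset α)) D, mul_comm,
    ← smul_eq_mul, ← sum_const]
  refine sum_congr rfl fun Q hQ => ?_
  obtain ⟨⟨x, y⟩, hp, rfl⟩ := mem_image.1 hQ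
  have hfiber : {q ∈ D | ({q.1, q.2} : Finset α) = {x, y}} = {(x, y), (y, x)} := by
    ext ⟨u, v⟩
    simp only [mem_filter, mem_insert, mem_singleton, Prod.mk.injEq, Finset.pair_eq_pair_iff]
    constructor
    · exact fun h => h.2
    · rintro (⟨rfl, rfl⟩ | ⟨rfl, rfl⟩)
      · exact ⟨hp, .inl ⟨rfl, rfl⟩⟩
      · exact ⟨hswap _ hp, .inr ⟨rfl, rfl⟩⟩
  rw [hfiber, card_pair]
  exact fun h => hne _ hp (Prod.mk.inj h).1

section

variable {V : Type*}

theorem interval_comm (G : SimpleGraph V) (u v : V) : interval G u v = interval G v u := by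
  ext x
  simp only [interval, Set.mem_ofPred_eq, G.dist_comm (u := v) (v := x),
    G.dist_comm (u := x) (v := u), G.dist_comm (u := v) (v := u)]
  omega

theorem GoodQuad.swap_left {G : SimpleGraph V} {a b c d : V} (h : GoodQuad G a b c d) :
    GoodQuad G b a c d := by
  obtain ⟨hab, hac, had, hbc, hbd, hcd, hx⟩ := h
  exact ⟨hab.symm, hbc, hbd, hac, had, hcd, by rwa [interval_comm G b a]⟩

theorem GoodQuad.swap_pairs {G : SimpleGraph V} {a b c d : V} (h : GoodQuad G a b c d) :
    GoodQuad G c d a b := by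
  obtain ⟨hab, hac, had, hbc, hbd, hcd, hx⟩ := h
  exact ⟨hcd, hac.symm, hbc.symm, had.symm, hbd.symm, hab, by rwa [Set.inter_comm]⟩

end

section

variable {V : Type*} [DecidableEq V]

def orderedQuadSet (U : Finset V) : Finset (Finset V × Finset V) :=
  {p ∈ (U.powersetCard 2 ×ˢ U.powersetCard 2) | Disjoint p.1 p.2}

theorem card_orderedQuadSet (U : Finset V) :
    #(orderedQuadSet U) = (#U).choose 2 * (#U - 2).choose 2 := by
  have hfiber : ∀ P ∈ U.powersetCard 2,
      #{R ∈ U.powersetCard 2 | Disjoint P R} = (#U - 2).choose 2 := by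
    intro P hP
    obtain ⟨hPU, hP2⟩ := mem_powersetCard.1 hP
    have : {R ∈ U.powersetCard 2 | Disjoint P R} = (U \ P).powersetCard 2 := by
      ext R
      simp only [mem_filter, mem_powersetCard, subset_sdiff, disjoint_comm (a := P)]
      tauto
    rw [this, card_powersetCard, card_sdiff_of_subset hPU, hP2]
  rw [orderedQuadSet, card_filter, sum_product, ← card_powersetCard 2 U, ← smul_eq_mul,
    ← sum_const]
  refine sum_congr rfl fun P hP => ?_
  rw [← card_filter, hfiber P hP]

theorem quadSet_eq_image (U : Finset V) :
    QuadSet U = ↑((orderedQuadSet U).image fun p => ({p.1, p.2} : Finset (Finset V))) := by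
  ext Q
  simp only [QuadSet, orderedQuadSet, Set.mem_ofPred_eq, coe_image, coe_filter, Set.mem_image,
    mem_product, mem_powersetCard, card_eq_two, Prod.exists]
  constructor
  · rintro ⟨a, b, c, d, ha, hb, hc, hd, hab, hac, had, hbc, hbd, hcd, rfl⟩
    refine ⟨{a, b}, {c, d}, ⟨⟨⟨?_, a, b, hab, rfl⟩, ?_, c, d, hcd, rfl⟩, ?_⟩, rfl⟩
    · simp [insert_subset_iff, ha, hb]
    · simp [insert_subset_iff, hc, hd]
    · exact disjoint_pair_pair_iff.2 ⟨hac, had, hbc, hbd⟩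
  · rintro ⟨_, _, ⟨⟨⟨hP, a, b, hab, rfl⟩, hR, c, d, hcd, rfl⟩, hdisj⟩, rfl⟩
    simp only [insert_subset_iff, singleton_subset_iff] at hP hR
    obtain ⟨hac, had, hbc, hbd⟩ := disjoint_pair_pair_iff.1 hdisj
    exact ⟨a, b, c, d, hP.1, hP.2, hR.1, hR.2, hab, hac, had, hbc, hbd, hcd, rfl⟩

theorem two_mul_ncard_quadSet (U : Finset V) :
    2 * (QuadSet U).ncard = (#U).choose 2 * (#U - 2).choose 2 := by
  rw [quadSet_eq_image, Set.ncard_coe_finset, two_mul_card_image_pair, card_orderedQuadSet]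
  · rintro ⟨P, R⟩ hp (rfl : P = R)
    obtain ⟨hP, hdisj⟩ := mem_filter.1 hp
    have hP2 := (mem_powersetCard.1 (mem_product.1 hP).1).2
    simp [(disjoint_self_iff_empty P).1 hdisj] at hP2
  · rintro ⟨P, R⟩ hp
    simp_all [orderedQuadSet, disjoint_comm]

theorem epsU_eq (G : SimpleGraph V) (U : Finset V) :
    epsU G U = (goodQuadSet G U).ncard / (2 * #U * (#U - 1) * ((#U - 2).choose 2 : ℕ)) := by
  have hquad : (2 * (QuadSet U).ncard : ℚ) = (#U).choose 2 * (#U - 2).choose 2 := by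
    exact_mod_cast two_mul_ncard_quadSet U
  rw [Nat.cast_choose_two] at hquad
  rw [epsU]
  congr 1
  linear_combination 4 * hquad

theorem goodPairs_subset (G : SimpleGraph V) (U : Finset V) (a b : V) :
    goodPairs G U a b ⊆ ↑((U \ {a, b}).powersetCard 2) := by
  rintro _ ⟨c, hc, d, hd, rfl, -, hac, had, hbc, hbd, hcd, -⟩
  simp [insert_subset_iff, hc, hd, hac.symm, had.symm, hbc.symm, hbd.symm, card_pair hcd]

theorem ncard_goodPairs_le (G : SimpleGraph V) {U : Finset V} {a b : V} (ha : a ∈ U)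
    (hb : b ∈ U) (hab : a ≠ b) : (goodPairs G U a b).ncard ≤ (#U - 2).choose 2 := by
  have hsub : {a, b} ⊆ U := by simp [insert_subset_iff, ha, hb]
  calc (goodPairs G U a b).ncard ≤ #((U \ {a, b}).powersetCard 2) := by
        simpa using Set.ncard_le_ncard (goodPairs_subset G U a b)
    _ = (#U - 2).choose 2 := by rw [card_powersetCard, card_sdiff_of_subset hsub, card_pair hab]

theorem exists_eq_pair_of_mem_goodQuadsContaining {G : SimpleGraph V} {U : Finset V} {a : V}
    {Q : Finset (Finset V)} (hQ : Q ∈ goodQuadsContaining G U a) :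
    ∃ b ∈ U.erase a, ∃ s ∈ goodPairs G U a b, Q = {{a, b}, s} := by
  have key : ∀ {x y c d}, x ∈ U → y ∈ U → c ∈ U → d ∈ U → GoodQuad G x y c d →
      ∃ b ∈ U.erase x, ∃ s ∈ goodPairs G U x b, {{x, y}, {c, d}} = ({{x, b}, s} : Finset _) :=
    fun hx hy hc hd hq => ⟨_, mem_erase.2 ⟨hq.1.symm, hy⟩, _, ⟨_, hc, _, hd, rfl, hq⟩, rfl⟩
  obtain ⟨⟨x, y, c, d, hx, hy, hc, hd, hq, rfl⟩, s, hs, has⟩ := hQ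
  simp only [mem_insert, mem_singleton] at hs
  rcases hs with rfl | rfl <;> simp only [mem_insert, mem_singleton] at has <;>
    rcases has with rfl | rfl
  · exact key hx hy hc hd hq
  · simpa only [pair_comm x a] using key hy hx hc hd hq.swap_left
  · simpa only [pair_comm {a, d}] using key hc hd hx hy hq.swap_pairs
  · simpa only [pair_comm c a, pair_comm {a, c}] using key hd hc hx hy hq.swap_pairs.swap_left

theorem ncard_goodQuadsContaining_le_sum (G : SimpleGraph V) (U : Finset V) (a : V) :
    (goodQuadsContaining G U a).ncard ≤ ∑ b ∈ U.erase a, (goodPairs G U a b).ncard := by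
  have hfin : ∀ b, (goodPairs G U a b).Finite := fun b =>
    (finite_toSet _).subset (goodPairs_subset G U a b)
  have hsub : goodQuadsContaining G U a ⊆
      ⋃ b ∈ U.erase a, (fun s => ({{a, b}, s} : Finset (Finset V))) '' goodPairs G U a b := by
    intro Q hQ
    obtain ⟨b, hb, s, hs, rfl⟩ := exists_eq_pair_of_mem_goodQuadsContaining hQ
    exact Set.mem_biUnion hb ⟨s, hs, rfl⟩
  calc (goodQuadsContaining G U a).ncard
      ≤ (⋃ b ∈ U.erase a, (fun s => ({{a, b}, s} : Finset (Finset V))) ''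
          goodPairs G U a b).ncard :=
        Set.ncard_le_ncard hsub ((U.erase a).finite_toSet.biUnion fun b _ => (hfin b).image _)
    _ ≤ ∑ b ∈ U.erase a, ((fun s => ({{a, b}, s} : Finset (Finset V))) ''
          goodPairs G U a b).ncard := set_ncard_biUnion_le _ _
    _ ≤ ∑ b ∈ U.erase a, (goodPairs G U a b).ncard :=
        sum_le_sum fun b _ => Set.ncard_image_le (hfin b)

theorem card_lt_of_not_uGood {G : SimpleGraph V} {U : Finset V} {a : V} (hnot : ¬UGood G U a)
    {Ua : Finset V} (hsub : Ua ⊆ U)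
    (hrich : ∀ b ∈ Ua, 4 * epsU G U * (#U - 2).choose 2 ≤ (goodPairs G U a b).ncard) :
    (#Ua : ℚ) < 4 * epsU G U * (#U - 1) := by
  by_contra! hcard
  exact hnot ⟨Ua, hsub, Int.ceil_le.2 (by exact_mod_cast hcard),
    fun b hb => Int.ceil_le.2 (by exact_mod_cast hrich b hb)⟩

end

theorem stmt17_general {V : Type*} [DecidableEq V] (G : SimpleGraph V)
    (U : Finset V) (hU : 4 ≤ U.card)
    (a : V) (ha : a ∈ U) (hnot : ¬ UGood G U a) :
    ((goodQuadsContaining G U a).ncard : ℤ) <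
      ⌈(4 * ((goodQuadSet G U).ncard : ℚ)) / (U.card : ℚ)⌉ := by
  have hC : (0 : ℚ) < ((#U - 2).choose 2 : ℕ) := by exact_mod_cast Nat.choose_pos (by omega)
  have hε : 0 ≤ epsU G U := by rw [epsU]; positivity
  have hn : (#U : ℚ) - 1 ≠ 0 := by
    have : (4 : ℚ) ≤ #U := by exact_mod_cast hU
    linarith
  have hsum := sum_lt_of_card_filter_lt hC (mul_nonneg (mul_nonneg zero_le_four hε) hC.le)
    (fun b hb => by
      exact_mod_cast ncard_goodPairs_le G ha (mem_erase.1 hb).2 (mem_erase.1 hb).1.symm)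
    (card_lt_of_not_uGood hnot ((filter_subset _ _).trans (erase_subset a U))
      fun b hb => (mem_filter.1 hb).2)
  rw [Int.lt_ceil]
  calc ((goodQuadsContaining G U a).ncard : ℚ)
      ≤ ∑ b ∈ U.erase a, ((goodPairs G U a b).ncard : ℚ) := by
        exact_mod_cast ncard_goodQuadsContaining_le_sum G U a
    _ < _ := hsum
    _ = 4 * (goodQuadSet G U).ncard / #U := by
        rw [card_erase_of_mem ha, Nat.cast_sub (by omega), epsU_eq]
        field_simp
        ring

/-- if `|U| ≥ 4`, there is at least one good quadruple over `U`,
and `a ∈ U` is not `U`-good, then the number of good quadruples containing `a`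
is strictly less than `⌈4·q_good(U)/|U|⌉`. -/
theorem stmt17 {V : Type*} [Fintype V] [DecidableEq V] (G : SimpleGraph V)
    (U : Finset V) (hU : 4 ≤ U.card) (hgood : 0 < (goodQuadSet G U).ncard)
    (a : V) (ha : a ∈ U) (hnot : ¬ UGood G U a) :
    ((goodQuadsContaining G U a).ncard : ℤ) <
      ⌈(4 * ((goodQuadSet G U).ncard : ℚ)) / (U.card : ℚ)⌉ :=
  stmt17_general G U hU a ha hnot
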